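/- In the case λ = 0, the Newton sequence t₀ = 0, t_{k+1} = t_k - h(t_k)/h'(t_k) satisfies t* - t_{k+1} ≤ (1/2)(t* - t_k) for all k, i.e., converges Q-linearly to t*; if moreover h'(t*) < 0, then t* - t_{k+1} ≤ (D⁻h'(t*)/(-2h'(t*)))(t* - t_k)², i.e., converges Q-quadratically. -/

import Mathlib

open Set Filter

/-!
Write `N x = x - h x / h' x` for the Newton map. Since `h'` is increasing, `h` is convex, and the
two tangent lines at `x < t*` and at `t*` trap `N x` in `[x, t*]`. Since `h'` is itself convex, the
trapezoid rule overestimates `h t* - h x = ∫ h'`, which gives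
`t* - N x ≤ (h' t* - h' x) / (-2 h' x) * (t* - x)`. The factor is at most `1/2` because
`h' t* ≤ 0`, and at most `D (t* - x) / (-2 h' t*)` because convexity bounds the secant slope of
`h'` by its left derivative `D` at `t*`.
-/

theorem MonotoneOn.convexOn_of_hasDerivWithinAt {S : Set ℝ} {f f' : ℝ → ℝ}
    (hmono : MonotoneOn f' S) (hS : Convex ℝ S)
    (hf : ∀ x ∈ S, HasDerivWithinAt f (f' x) S x) : ConvexOn ℝ S f := by
  have hint : ∀ x ∈ interior S, HasDerivAt f (f' x) x := fun x hx ↦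
    (hf x (interior_subset hx)).hasDerivAt (mem_interior_iff_mem_nhds.1 hx)
  refine MonotoneOn.convexOn_of_deriv hS (fun x hx ↦ (hf x hx).continuousWithinAt)
    (fun x hx ↦ (hint x hx).differentiableAt.differentiableWithinAt) ?_
  exact (hmono.mono interior_subset).congr fun x hx ↦ (hint x hx).deriv.symm

theorem image_sub_le_image_sub_of_hasDerivWithinAt_le {f g f' g' : ℝ → ℝ} {a b : ℝ}
    (hab : a ≤ b) (hf : ∀ x ∈ Icc a b, HasDerivWithinAt f (f' x) (Icc a b) x)
    (hg : ∀ x ∈ Icc a b, HasDerivWithinAt g (g' x) (Icc a b) x)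
    (hle : ∀ x ∈ Ioo a b, f' x ≤ g' x) : f b - f a ≤ g b - g a := by
  have hd : ∀ x ∈ Icc a b, HasDerivWithinAt (g - f) (g' x - f' x) (Icc a b) x :=
    fun x hx ↦ (hg x hx).sub (hf x hx)
  have hmono : MonotoneOn (g - f) (Icc a b) := by
    refine monotoneOn_of_hasDerivWithinAt_nonneg (f' := fun x ↦ g' x - f' x) (convex_Icc a b)
      (fun x hx ↦ (hd x hx).continuousWithinAt) (fun x hx ↦ ?_) (fun x hx ↦ ?_)
    · exact (hd x (interior_subset hx)).mono interior_subset
    · rw [interior_Icc] at hx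
      exact sub_nonneg.2 (hle x hx)
  have := hmono (left_mem_Icc.2 hab) (right_mem_Icc.2 hab) hab
  simp only [Pi.sub_apply] at this
  linarith

theorem image_sub_le_trapezoid_of_convexOn_deriv {S : Set ℝ} {f f' : ℝ → ℝ} {a b : ℝ}
    (hf : ∀ x ∈ S, HasDerivWithinAt f (f' x) S x) (hconv : ConvexOn ℝ S f')
    (ha : a ∈ S) (hb : b ∈ S) (hab : a ≤ b) :
    f b - f a ≤ (f' a + f' b) / 2 * (b - a) := by
  rcases hab.eq_or_lt with rfl | hab
  · simp
  have hsub : Icc a b ⊆ S := hconv.1.ordConnected.out ha hb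
  set m := (f' b - f' a) / (b - a)
  have hchord : ∀ x ∈ Ioo a b, f' x ≤ f' a + m * (x - a) := by
    intro x hx
    have := hconv.secant_mono ha (hsub (Ioo_subset_Icc_self hx)) hb hx.1.ne' hab.ne' hx.2.le
    rw [div_le_iff₀ (sub_pos.2 hx.1)] at this
    linarith
  have hquad : ∀ x ∈ Icc a b, HasDerivWithinAt (fun x ↦ f' a * (x - a) + m * (x - a) ^ 2 / 2)
      (f' a + m * (x - a)) (Icc a b) x := by
    intro x _
    have hlin := (hasDerivAt_id' x).sub_const a
    refine ((hlin.const_mul (f' a)).add ((hlin.pow 2).const_mul m |>.div_const 2)).hasDerivWithinAt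
      |>.congr_deriv ?_
    norm_num
    ring
  have := image_sub_le_image_sub_of_hasDerivWithinAt_le hab.le
    (fun x hx ↦ (hf x (hsub hx)).mono hsub) hquad hchord
  have hm : m * (b - a) = f' b - f' a := div_mul_cancel₀ _ (sub_pos.2 hab).ne'
  linear_combination this + (b - a) / 2 * hm

section NewtonStep

variable {S : Set ℝ} {h h' : ℝ → ℝ} {a b : ℝ}

theorem newton_step_mem_Icc (hconv : ConvexOn ℝ S h) (hd : ∀ x ∈ S, HasDerivWithinAt h (h' x) S x)
    (ha : a ∈ S) (hb : b ∈ S) (hab : a < b) (hzero : h b = 0) (ha' : h' a < 0) (hb' : h' b ≤ 0) :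
    a - h a / h' a ∈ Icc a b := by
  have hlo := hconv.le_slope_of_hasDerivWithinAt ha hb hab (hd a ha)
  have hhi := hconv.slope_le_of_hasDerivWithinAt ha hb hab (hd b hb)
  have hba : 0 < b - a := sub_pos.2 hab
  rw [slope_def_field, hzero, le_div_iff₀ hba] at hlo
  rw [slope_def_field, hzero, div_le_iff₀ hba] at hhi
  have hpos : 0 ≤ h a := by linarith [mul_nonpos_of_nonpos_of_nonneg hb' hba.le]
  have hstep : -(b - a) ≤ h a / h' a := by
    rw [le_div_iff_of_neg ha']
    linarith
  constructor
  · linarith [div_nonpos_of_nonneg_of_nonpos hpos ha'.le]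
  · linarith

theorem sub_newton_step_le (hd : ∀ x ∈ S, HasDerivWithinAt h (h' x) S x)
    (hconv' : ConvexOn ℝ S h') (ha : a ∈ S) (hb : b ∈ S) (hab : a ≤ b) (hzero : h b = 0)
    (ha' : h' a < 0) :
    b - (a - h a / h' a) ≤ (h' b - h' a) / (-2 * h' a) * (b - a) := by
  have htrap := image_sub_le_trapezoid_of_convexOn_deriv hd hconv' ha hb hab
  have hq : h a / h' a * h' a = h a := div_mul_cancel₀ _ ha'.ne
  rw [div_mul_eq_mul_div, le_div_iff₀ (by linarith)]
  linarith

theorem sub_newton_step_le_half (hd : ∀ x ∈ S, HasDerivWithinAt h (h' x) S x)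
    (hconv' : ConvexOn ℝ S h') (ha : a ∈ S) (hb : b ∈ S) (hab : a ≤ b) (hzero : h b = 0)
    (ha' : h' a < 0) (hb' : h' b ≤ 0) :
    b - (a - h a / h' a) ≤ 1 / 2 * (b - a) := by
  refine (sub_newton_step_le hd hconv' ha hb hab hzero ha').trans ?_
  refine mul_le_mul_of_nonneg_right ?_ (sub_nonneg.2 hab)
  rw [div_le_iff₀ (by linarith)]
  linarith

theorem sub_newton_step_le_sq {D : ℝ} (hd : ∀ x ∈ S, HasDerivWithinAt h (h' x) S x)
    (hconv' : ConvexOn ℝ S h') (ha : a ∈ S) (hb : b ∈ S) (hab : a < b) (hzero : h b = 0)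
    (hmono : h' a ≤ h' b) (hb' : h' b < 0) (hD : HasDerivWithinAt h' D (Iio b) b) :
    b - (a - h a / h' a) ≤ D / (-2 * h' b) * (b - a) ^ 2 := by
  have hslope : h' b - h' a ≤ D * (b - a) := by
    have := hconv'.slope_le_of_hasDerivWithinAt_Iio ha hb hab hD
    rwa [slope_def_field, div_le_iff₀ (sub_pos.2 hab)] at this
  calc b - (a - h a / h' a)
      ≤ (h' b - h' a) / (-2 * h' a) * (b - a) :=
        sub_newton_step_le hd hconv' ha hb hab.le hzero (hmono.trans_lt hb')
    _ ≤ (h' b - h' a) / (-2 * h' b) * (b - a) := by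
        refine mul_le_mul_of_nonneg_right ?_ (sub_nonneg.2 hab.le)
        exact div_le_div_of_nonneg_left (by linarith) (by linarith) (by linarith)
    _ ≤ D * (b - a) / (-2 * h' b) * (b - a) := by
        refine mul_le_mul_of_nonneg_right ?_ (sub_nonneg.2 hab.le)
        exact div_le_div_of_nonneg_right hslope (by linarith)
    _ = D / (-2 * h' b) * (b - a) ^ 2 := by ring

end NewtonStep

theorem scalar_sequence_rates_general (R β : ℝ)
    (f f' : ℝ → ℝ)
    (hder : ∀ t ∈ Ico (0:ℝ) R, HasDerivWithinAt f (f' t) (Ico (0:ℝ) R) t)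
    (hconv : ConvexOn ℝ (Ico (0:ℝ) R) f')
    (hmono : StrictMonoOn f' (Ico (0:ℝ) R))
    (h : ℝ → ℝ) (hh : h = fun t => β + f t)
    (tstar : ℝ) (htstar : tstar ∈ Ioo (0:ℝ) R) (hz : h tstar = 0)
    (hneg : ∀ t ∈ Ico (0:ℝ) tstar, f' t < 0)
    (D : ℝ) (hD : HasDerivWithinAt f' D (Iio tstar) tstar)
    (t : ℕ → ℝ) (ht0 : t 0 = 0)
    (htk : ∀ k, t (k + 1) = t k - h (t k) / f' (t k)) :
    (∀ k, tstar - t (k + 1) ≤ (1/2) * (tstar - t k)) ∧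
    (f' tstar < 0 →
      ∀ k, tstar - t (k + 1) ≤ (D / (-2 * f' tstar)) * (tstar - t k) ^ 2) := by
  have hhd : ∀ x ∈ Ico (0:ℝ) R, HasDerivWithinAt h (f' x) (Ico (0:ℝ) R) x :=
    fun x hx ↦ hh ▸ (hder x hx).const_add β
  have hhconv := hmono.monotoneOn.convexOn_of_hasDerivWithinAt (convex_Ico 0 R) hhd
  have hstar : tstar ∈ Ico (0:ℝ) R := Ioo_subset_Ico_self htstar
  have hf'star : f' tstar ≤ 0 := le_of_tendsto hD.continuousWithinAt <| by
    filter_upwards [Ioo_mem_nhdsLT htstar.1] with u hu using (hneg u ⟨hu.1.le, hu.2⟩).le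
  have hfixed : ∀ k, t k = tstar → t (k + 1) = tstar := fun k hk ↦ by simp [htk, hk, hz]
  have hmem : ∀ k, t k ∈ Icc 0 tstar := by
    intro k
    induction k with
    | zero => rw [ht0]; exact ⟨le_rfl, htstar.1.le⟩
    | succ k ih =>
      rcases ih.2.eq_or_lt with heq | hlt
      · rw [hfixed k heq]; exact ⟨htstar.1.le, le_rfl⟩
      · have := newton_step_mem_Icc hhconv hhd ⟨ih.1, hlt.trans htstar.2⟩ hstar hlt hz
          (hneg _ ⟨ih.1, hlt⟩) hf'star
        rw [htk]; exact ⟨ih.1.trans this.1, this.2⟩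
  have hS : ∀ k, t k ∈ Ico (0:ℝ) R := fun k ↦ ⟨(hmem k).1, (hmem k).2.trans_lt htstar.2⟩
  refine ⟨fun k ↦ ?_, fun hf'star_neg k ↦ ?_⟩ <;> rcases (hmem k).2.eq_or_lt with heq | hlt
  · simp [hfixed k heq, heq]
  · exact htk k ▸ sub_newton_step_le_half hhd hconv (hS k) hstar hlt.le hz
      (hneg _ ⟨(hmem k).1, hlt⟩) hf'star
  · simp [hfixed k heq, heq]
  · exact htk k ▸ sub_newton_step_le_sq hhd hconv (hS k) hstar hlt hz
      (hmono.monotoneOn (hS k) hstar hlt.le) hf'star_neg hD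

/-- For `λ = 0` the Newton sequence converges Q-linearly to `t*`:
`t* - t_{k+1} ≤ (1/2)(t* - t_k)`; if moreover `h'(t*) < 0` it converges
Q-quadratically: `t* - t_{k+1} ≤ (D⁻h'(t*)/(-2h'(t*)))(t* - t_k)²`. -/
theorem scalar_sequence_rates (R β : ℝ) (hR : 0 < R) (hβ : 0 < β)
    (f f' : ℝ → ℝ)
    (hder : ∀ t ∈ Ico (0:ℝ) R, HasDerivWithinAt f (f' t) (Ico (0:ℝ) R) t)
    (hf0 : f 0 = 0) (hf'0 : f' 0 = -1)
    (hconv : ConvexOn ℝ (Ico (0:ℝ) R) f')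
    (hmono : StrictMonoOn f' (Ico (0:ℝ) R))
    (h : ℝ → ℝ) (hh : h = fun t => β + f t)
    (tstar : ℝ) (htstar : tstar ∈ Ioo (0:ℝ) R) (hz : h tstar = 0)
    (hmin : ∀ t ∈ Ioo (0:ℝ) R, h t = 0 → tstar ≤ t)
    (hneg : ∀ t ∈ Ico (0:ℝ) tstar, f' t < 0)
    (D : ℝ) (hD : HasDerivWithinAt f' D (Iio tstar) tstar)
    (t : ℕ → ℝ) (ht0 : t 0 = 0)
    (htk : ∀ k, t (k + 1) = t k - h (t k) / f' (t k)) :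
    (∀ k, tstar - t (k + 1) ≤ (1/2) * (tstar - t k)) ∧
    (f' tstar < 0 →
      ∀ k, tstar - t (k + 1) ≤ (D / (-2 * f' tstar)) * (tstar - t k) ^ 2) :=
  scalar_sequence_rates_general R β f f' hder hconv hmono h hh tstar htstar hz hneg D hD t ht0 htk
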